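/- arXiv:2307.16754 — 2 statements merged into one kernel-verified Lean document; each statement's English description precedes it below -/
import Mathlib

section
/- (Gap decomposition for the extrapolated primal-dual update.) Let X ⊆ ℝ^n and Y ⊆ ℝ^m be convex sets, let φ : ℝ^n → ℝ and ψ : ℝ^m → ℝ be differentiable, let M be a real m×n matrix, let η_k ≥ 0, let g_k ∈ ℝ^m and h_k ∈ ℝ^n be arbitrary vectors, and let x_{k−1} ∈ ℝ^n, y_{k−1} ∈ ℝ^m. Suppose x_k minimizes x ↦ η_k⟨x, h_k⟩ + D_φ(x, x_{k−1}) over X and y_k maximizes v ↦ η_k⟨g_k, v⟩ − D_ψ(v, y_{k−1}) over Y. Then x_k ∈ X, y_k ∈ Y, and for every u ∈ X and v ∈ Y: η_k(⟨M x_k, v⟩ − ⟨M u, y_k⟩) ≤ E_k − D_φ(u, x_k) + D_φ(u, x_{k−1}) − D_ψ(v, y_k) + D_ψ(v, y_{k−1}), where E_k := η_k⟨M x_k − g_k, v − y_k⟩ − η_k⟨u − x_k, Mᵀ y_k − h_k⟩ − D_ψ(y_k, y_{k−1}) − D_φ(x_k, x_{k−1}). -/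
/-- The standard inner product on `ℝ^d`. -/
def dotp {d : ℕ} (a b : Fin d → ℝ) : ℝ := ∑ i, a i * b i

/-- The Bregman divergence `D_f(a, b) = f a - f b - ⟨∇f(b), a - b⟩`. -/
noncomputable def breg {d : ℕ} (f : (Fin d → ℝ) → ℝ) (a b : Fin d → ℝ) : ℝ :=
  f a - f b - fderiv ℝ f b (a - b)

/-! First-order optimality of each Bregman proximal step, combined with the three-point identity
`D(u, p) - D(u, x) - D(x, p) = (∇f x - ∇f p)(u - x)`, gives the three-point inequality
`ℓ x + D(x, p) + D(u, x) ≤ ℓ u + D(u, p)` for the primal and for the (negated) dual step. Their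
sum is the claim, because `⟨u - x_k, Mᵀ y_k⟩ = ⟨M u, y_k⟩ - ⟨M x_k, y_k⟩` turns the bilinear part
of `E_k` into the gap. -/

open Matrix

theorem IsMinOn.hasFDerivAt_nonneg_of_convex {E : Type*} [NormedAddCommGroup E]
    [NormedSpace ℝ E] {f : E → ℝ} {f' : StrongDual ℝ E} {s : Set E} {a u : E}
    (hs : Convex ℝ s) (ha : a ∈ s) (hu : u ∈ s) (hmin : IsMinOn f s a)
    (hf : HasFDerivAt f f' a) : 0 ≤ f' (u - a) :=
  hmin.localize.hasFDerivWithinAt_nonneg hf.hasFDerivWithinAt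
    (sub_mem_posTangentConeAt_of_segment_subset (hs.segment_subset ha hu))

lemma dotp_eq_dotProduct {d : ℕ} (a b : Fin d → ℝ) : dotp a b = a ⬝ᵥ b := rfl

section Bregman

variable {d : ℕ} {f : (Fin d → ℝ) → ℝ}

lemma breg_sub_breg_sub_breg (u x p : Fin d → ℝ) :
    breg f u p - breg f u x - breg f x p = (fderiv ℝ f x - fderiv ℝ f p) (u - x) := by
  have hsplit : u - p = (u - x) + (x - p) := by abel
  simp only [breg, _root_.sub_apply, hsplit, map_add]
  ring

lemma hasFDerivAt_breg_left {x : Fin d → ℝ} (hf : DifferentiableAt ℝ f x) (p : Fin d → ℝ) :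
    HasFDerivAt (fun z => breg f z p) (fderiv ℝ f x - fderiv ℝ f p) x := by
  have hlin : HasFDerivAt (fun z => fderiv ℝ f p (z - p)) (fderiv ℝ f p) x :=
    (fderiv ℝ f p).hasFDerivAt.comp x ((hasFDerivAt_id x).sub_const p)
  exact (hf.hasFDerivAt.sub_const (f p)).sub hlin

theorem IsMinOn.breg_three_point {X : Set (Fin d → ℝ)} (hX : Convex ℝ X)
    (ℓ : (Fin d → ℝ) →ₗ[ℝ] ℝ) {p x u : Fin d → ℝ} (hx : x ∈ X) (hu : u ∈ X)
    (hf : DifferentiableAt ℝ f x) (hmin : IsMinOn (fun z => ℓ z + breg f z p) X x) :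
    ℓ x + breg f x p + breg f u x ≤ ℓ u + breg f u p := by
  have hderiv : HasFDerivAt (fun z => ℓ z + breg f z p)
      (ℓ.toContinuousLinearMap + (fderiv ℝ f x - fderiv ℝ f p)) x :=
    ℓ.toContinuousLinearMap.hasFDerivAt.add (hasFDerivAt_breg_left hf p)
  have hopt := hmin.hasFDerivAt_nonneg_of_convex hX hx hu hderiv
  rw [_root_.add_apply, ← breg_sub_breg_sub_breg] at hopt
  simp only [LinearMap.coe_toContinuousLinearMap', map_sub] at hopt
  linarith

end Bregman

theorem stmt_5_general {m n : ℕ} (X : Set (Fin n → ℝ)) (hX : Convex ℝ X)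
    (Y : Set (Fin m → ℝ)) (hY : Convex ℝ Y)
    (φ : (Fin n → ℝ) → ℝ) (hφ : Differentiable ℝ φ)
    (ψ : (Fin m → ℝ) → ℝ) (hψ : Differentiable ℝ ψ)
    (M : Matrix (Fin m) (Fin n) ℝ) (ηk : ℝ)
    (gk : Fin m → ℝ) (hk : Fin n → ℝ)
    (xprev : Fin n → ℝ) (yprev : Fin m → ℝ) (xk : Fin n → ℝ) (yk : Fin m → ℝ)
    (hxkX : xk ∈ X)
    (hxmin : IsMinOn (fun x => ηk * dotp x hk + breg φ x xprev) X xk)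
    (hykY : yk ∈ Y)
    (hymax : IsMaxOn (fun v => ηk * dotp gk v - breg ψ v yprev) Y yk) :
    xk ∈ X ∧ yk ∈ Y ∧
      ∀ u ∈ X, ∀ v ∈ Y,
        ηk * (dotp (M.mulVec xk) v - dotp (M.mulVec u) yk) ≤
          (ηk * dotp (M.mulVec xk - gk) (v - yk)
            - ηk * dotp (u - xk) (M.transpose.mulVec yk - hk)
            - breg ψ yk yprev - breg φ xk xprev)
          - breg φ u xk + breg φ u xprev - breg ψ v yk + breg ψ v yprev := by
  refine ⟨hxkX, hykY, fun u hu v hv => ?_⟩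
  -- `dotp` is definitionally `⬝ᵥ`, so both objectives have the shape `ℓ z + breg f z p`.
  have hprimal : ηk * dotp xk hk + breg φ xk xprev + breg φ u xk ≤
      ηk * dotp u hk + breg φ u xprev :=
    hxmin.breg_three_point hX (ηk • (dotProductBilin ℝ ℝ).flip hk) hxkX hu (hφ xk)
  have hdualMin : IsMinOn (fun v => -ηk * dotp gk v + breg ψ v yprev) Y yk := by
    have hneg : (fun v => -(ηk * dotp gk v - breg ψ v yprev)) =
        fun v => -ηk * dotp gk v + breg ψ v yprev := funext fun w => by ring
    exact hneg ▸ hymax.neg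
  have hdual : -ηk * dotp gk yk + breg ψ yk yprev + breg ψ v yk ≤
      -ηk * dotp gk v + breg ψ v yprev :=
    hdualMin.breg_three_point hY (-ηk • dotProductBilin ℝ ℝ gk) hykY hv (hψ yk)
  have hsplit : dotp (M *ᵥ xk - gk) (v - yk) - dotp (u - xk) (Mᵀ *ᵥ yk - hk) =
      dotp (M *ᵥ xk) v - dotp (M *ᵥ u) yk - (dotp gk v - dotp gk yk)
        + (dotp u hk - dotp xk hk) := by
    simp only [dotp_eq_dotProduct, sub_dotProduct, dotProduct_sub, mulVec_sub,
      dotProduct_transpose_mulVec, dotProduct_comm yk]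
    ring
  linear_combination hprimal + hdual - ηk * hsplit

/-- Gap decomposition for the extrapolated primal-dual update: if `x_k` minimizes
`x ↦ η_k⟨x, h_k⟩ + D_φ(x, x_{k-1})` over the convex set `X` and `y_k` maximizes
`v ↦ η_k⟨g_k, v⟩ - D_ψ(v, y_{k-1})` over the convex set `Y`, then `x_k ∈ X`, `y_k ∈ Y`, and
for every `u ∈ X`, `v ∈ Y`,
`η_k (⟨M x_k, v⟩ - ⟨M u, y_k⟩) ≤ E_k - D_φ(u, x_k) + D_φ(u, x_{k-1}) - D_ψ(v, y_k)
  + D_ψ(v, y_{k-1})`, where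
`E_k = η_k⟨M x_k - g_k, v - y_k⟩ - η_k⟨u - x_k, Mᵀ y_k - h_k⟩ - D_ψ(y_k, y_{k-1})
  - D_φ(x_k, x_{k-1})`. -/
theorem stmt_5 {m n : ℕ} (X : Set (Fin n → ℝ)) (hX : Convex ℝ X)
    (Y : Set (Fin m → ℝ)) (hY : Convex ℝ Y)
    (φ : (Fin n → ℝ) → ℝ) (hφ : Differentiable ℝ φ)
    (ψ : (Fin m → ℝ) → ℝ) (hψ : Differentiable ℝ ψ)
    (M : Matrix (Fin m) (Fin n) ℝ) (ηk : ℝ) (hηk : 0 ≤ ηk)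
    (gk : Fin m → ℝ) (hk : Fin n → ℝ)
    (xprev : Fin n → ℝ) (yprev : Fin m → ℝ) (xk : Fin n → ℝ) (yk : Fin m → ℝ)
    (hxkX : xk ∈ X)
    (hxmin : IsMinOn (fun x => ηk * dotp x hk + breg φ x xprev) X xk)
    (hykY : yk ∈ Y)
    (hymax : IsMaxOn (fun v => ηk * dotp gk v - breg ψ v yprev) Y yk) :
    xk ∈ X ∧ yk ∈ Y ∧
      ∀ u ∈ X, ∀ v ∈ Y,
        ηk * (dotp (M.mulVec xk) v - dotp (M.mulVec u) yk) ≤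
          (ηk * dotp (M.mulVec xk - gk) (v - yk)
            - ηk * dotp (u - xk) (M.transpose.mulVec yk - hk)
            - breg ψ yk yprev - breg φ xk xprev)
          - breg φ u xk + breg φ u xprev - breg ψ v yk + breg ψ v yprev :=
  stmt_5_general X hX Y hY φ hφ ψ hψ M ηk gk hk xprev yprev xk yk hxkX hxmin hykY hymax
end

section
/- (Ergodic convergence of the extrapolated cyclic primal-dual method, abstract form.) Let X ⊆ ℝ^n and Y ⊆ ℝ^m be nonempty compact convex sets, let ‖·‖_X and ‖·‖_Y be norms on ℝ^n and ℝ^m, let φ : ℝ^n → ℝ be differentiable and c_φ-strongly convex with respect to ‖·‖_X with c_φ > 0, and let ψ : ℝ^m → ℝ be differentiable and c_ψ-strongly convex with respect to ‖·‖_Y with c_ψ > 0. Let M, M_x, M_y be real m×n matrices with M = M_x + M_y, and let L_x, L_y ≥ 0 satisfy |⟨M_x a, b⟩| ≤ L_x‖a‖_X‖b‖_Y and |⟨M_y a, b⟩| ≤ L_y‖a‖_X‖b‖_Y for all a ∈ ℝ^n, b ∈ ℝ^m; set μ := L_x + L_y and assume μ > 0. Let η_0 = 0, x_{−1} = x_0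 ∈ X, y_{−1} = y_0 ∈ Y, and for each k = 1, …, K let 0 < η_k ≤ √(c_φ c_ψ)/(2μ). Suppose that for each k ≥ 1 there are vectors g_k ∈ ℝ^m, h_k ∈ ℝ^n and auxiliary points x̂_k, x̂_{k−1} ∈ ℝ^n, ŷ_k, ŷ_{k−1} ∈ ℝ^m such that: (a) x_k minimizes x ↦ η_k⟨x, h_k⟩ + D_φ(x, x_{k−1}) over X and y_k maximizes v ↦ η_k⟨g_k, v⟩ − D_ψ(v, y_{k−1}) over Y; (b) M x_k − g_k = M_y((x_k − x̂_k) − (η_{k−1}/η_k)(x_{k−1} − x̂_{k−1})) + M_x((x_k − x_{k−1}) − (η_{k−1}/η_k)(x_{k−1} − x_{k−2})) and Mᵀ y_k − h_k = M_xᵀ((y_k − ŷ_k) − (η_{k−1}/η_k)(y_{k−1} − ŷ_{k−1})) + M_yᵀ((y_k − y_{k−1}) − (η_{k−1}/η_k)(y_{k−1} − y_{k−2})); (c) ‖x_k − x̂_k‖_X ≤ ‖x_k − x_{k−1}‖_X and ‖y_k − ŷ_k‖_Y ≤ ‖y_k − y_{k−1}‖_Y. Define H_K = Σ_{k=1}^K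 η_k, x̄_K = (1/H_K) Σ_{k=1}^K η_k x_k, and ȳ_K = (1/H_K) Σ_{k=1}^K η_k y_k. Then the duality gap satisfies sup_{u ∈ X, v ∈ Y} (⟨M x̄_K, v⟩ − ⟨M u, ȳ_K⟩) ≤ (sup_{u ∈ X, v ∈ Y} (D_φ(u, x_0) + D_ψ(v, y_0)))/H_K. In particular, if η_k = √(c_φ c_ψ)/(2μ) for all k ≥ 1, then H_K = K√(c_φ c_ψ)/(2μ), and for any ε > 0 the duality gap is at most ε whenever K ≥ ⌈2μ·(sup_{u ∈ X, v ∈ Y} (D_φ(u, x_0) + D_ψ(v, y_0)))/(√(c_φ c_ψ)·ε)⌉. -/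
section Aux

open Filter Set Topology

lemma dotp_eq {d : ℕ} (a b : Fin d → ℝ) : dotp a b = dotProduct a b := rfl

lemma dotp_comm {d : ℕ} (a b : Fin d → ℝ) : dotp a b = dotp b a := by
  simp [dotp, mul_comm]

lemma dotp_add_right {d : ℕ} (a b c : Fin d → ℝ) : dotp a (b + c) = dotp a b + dotp a c := by
  simp [dotp, mul_add, Finset.sum_add_distrib]

lemma dotp_sub_right {d : ℕ} (a b c : Fin d → ℝ) : dotp a (b - c) = dotp a b - dotp a c := by
  simp [dotp, mul_sub, Finset.sum_sub_distrib]

lemma dotp_smul_right {d : ℕ} (r : ℝ) (a b : Fin d → ℝ) : dotp a (r • b) = r * dotp a b := by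
  simp only [dotp, Finset.mul_sum, Pi.smul_apply, smul_eq_mul]
  exact Finset.sum_congr rfl fun i _ => by ring

lemma dotp_add_left {d : ℕ} (a b c : Fin d → ℝ) : dotp (a + b) c = dotp a c + dotp b c := by
  rw [dotp_comm, dotp_add_right, dotp_comm a, dotp_comm b]

lemma dotp_sub_left {d : ℕ} (a b c : Fin d → ℝ) : dotp (a - b) c = dotp a c - dotp b c := by
  rw [dotp_comm, dotp_sub_right, dotp_comm a, dotp_comm b]

lemma dotp_smul_left {d : ℕ} (r : ℝ) (a b : Fin d → ℝ) : dotp (r • a) b = r * dotp a b := by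
  rw [dotp_comm, dotp_smul_right, dotp_comm]

lemma dotp_sum_left {d : ℕ} (s : Finset ℕ) (f : ℕ → Fin d → ℝ) (b : Fin d → ℝ) :
    dotp (∑ i ∈ s, f i) b = ∑ i ∈ s, dotp (f i) b := by
  simp only [dotp, Finset.sum_apply, Finset.sum_mul]
  exact Finset.sum_comm

lemma dotp_transfer {d e : ℕ} (A : Matrix (Fin e) (Fin d) ℝ) (a : Fin d → ℝ) (b : Fin e → ℝ) :
    dotp (A.mulVec a) b = dotp a (A.transpose.mulVec b) := by
  rw [dotp_comm, dotp_eq, dotp_eq, Matrix.dotProduct_mulVec, ← Matrix.mulVec_transpose,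
    dotProduct_comm]

noncomputable def dotCLM {d : ℕ} (h : Fin d → ℝ) : (Fin d → ℝ) →L[ℝ] ℝ :=
  LinearMap.toContinuousLinearMap
    { toFun := fun z => dotp z h
      map_add' := fun a b => dotp_add_left a b h
      map_smul' := fun r a => by simpa using dotp_smul_left r a h }

lemma dotCLM_apply {d : ℕ} (h z : Fin d → ℝ) : dotCLM h z = dotp z h := rfl

lemma vi_lemma {d : ℕ} {f : (Fin d → ℝ) → ℝ} (hf : Differentiable ℝ f)
    (ℓ : (Fin d → ℝ) →L[ℝ] ℝ) {S : Set (Fin d → ℝ)} (hS : Convex ℝ S)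
    {a : Fin d → ℝ} (ha : a ∈ S)
    (hmin : IsMinOn (fun z => ℓ z + f z) S a) :
    ∀ u ∈ S, 0 ≤ ℓ (u - a) + fderiv ℝ f a (u - a) := by
  intro u hu
  set w := u - a with hw
  have hc : HasDerivAt (fun t : ℝ => a + t • w) w 0 := by
    simpa using ((hasDerivAt_id (0:ℝ)).smul_const w).const_add a
  set g : ℝ → ℝ := fun t => ℓ (a + t • w) + f (a + t • w) with hg
  have hF : HasDerivAt g (ℓ w + fderiv ℝ f a w) 0 := by
    have h1 : HasDerivAt (fun t : ℝ => ℓ (a + t • w)) (ℓ w) 0 :=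
      ℓ.hasFDerivAt.comp_hasDerivAt 0 hc
    have h2 : HasDerivAt (fun t : ℝ => f (a + t • w)) (fderiv ℝ f a w) 0 := by
      have h3 : HasFDerivAt f (fderiv ℝ f a) (a + (0:ℝ) • w) := by
        simpa using (hf a).hasFDerivAt
      exact h3.comp_hasDerivAt 0 hc
    exact h1.add h2
  have hseg : ∀ t ∈ Set.Ioc (0:ℝ) 1, g 0 ≤ g t := by
    intro t ht
    have hz : a + t • w ∈ S := by
      have h0t : (0:ℝ) ≤ 1 - t := by linarith [ht.2]
      have := hS ha hu h0t ht.1.le (by ring)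
      have he : (1 - t) • a + t • u = a + t • w := by
        rw [hw]; module
      rwa [he] at this
    have := isMinOn_iff.mp hmin _ hz
    simpa [g] using this
  have hslope := hasDerivAt_iff_tendsto_slope.mp hF
  have hmono : 𝓝[>] (0:ℝ) ≤ 𝓝[≠] (0:ℝ) :=
    nhdsWithin_mono 0 (fun t ht => ne_of_gt ht)
  have htend : Tendsto (slope g 0) (𝓝[>] (0:ℝ)) (𝓝 (ℓ w + fderiv ℝ f a w)) :=
    hslope.mono_left hmono
  refine ge_of_tendsto htend ?_
  have hmem : Set.Ioc (0:ℝ) 1 ∈ 𝓝[>] (0:ℝ) :=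
    Ioc_mem_nhdsGT_of_mem (by constructor <;> norm_num)
  filter_upwards [hmem] with t ht
  have hgt := hseg t ht
  have hsl : slope g 0 t = (g t - g 0) / t := by
    rw [slope_def_field]; ring_nf
  rw [hsl]
  apply div_nonneg (by linarith) ht.1.le

lemma breg_three {d : ℕ} (f : (Fin d → ℝ) → ℝ) (u b c : Fin d → ℝ) :
    breg f u c - breg f u b - breg f b c
      = (fderiv ℝ f b) (u - b) - (fderiv ℝ f c) (u - b) := by
  have h : (fderiv ℝ f c) (u - c) = (fderiv ℝ f c) (u - b) + (fderiv ℝ f c) (b - c) := by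
    rw [← map_add]; congr 1; abel
  simp only [breg, h]; ring

lemma prox_ineq {d : ℕ} {f : (Fin d → ℝ) → ℝ} (hf : Differentiable ℝ f)
    {S : Set (Fin d → ℝ)} (hS : Convex ℝ S) {c z : Fin d → ℝ} (hz : z ∈ S)
    {ℓ0 : (Fin d → ℝ) →L[ℝ] ℝ}
    (hmin : IsMinOn (fun w => ℓ0 w + breg f w c) S z) :
    ∀ u ∈ S, ℓ0 z - ℓ0 u ≤ breg f u c - breg f u z - breg f z c := by
  have hmin' : IsMinOn (fun w => (ℓ0 - fderiv ℝ f c) w + f w) S z := by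
    rw [isMinOn_iff] at hmin ⊢
    intro w hw
    have h1 := hmin w hw
    have he : ∀ v : Fin d → ℝ, (ℓ0 - fderiv ℝ f c) v + f v
        = (ℓ0 v + breg f v c) + (f c - (fderiv ℝ f c) c) := by
      intro v
      simp only [breg, ContinuousLinearMap.sub_apply, map_sub]
      ring
    rw [he w, he z]; linarith
  intro u hu
  have h := vi_lemma hf (ℓ0 - fderiv ℝ f c) hS hz hmin' u hu
  have h3 := breg_three f u z c
  simp only [ContinuousLinearMap.sub_apply, map_sub] at h h3
  linarith

lemma prox_ineq_max {d : ℕ} {f : (Fin d → ℝ) → ℝ} (hf : Differentiable ℝ f)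
    {S : Set (Fin d → ℝ)} (hS : Convex ℝ S) {c z : Fin d → ℝ} (hz : z ∈ S)
    {ℓ0 : (Fin d → ℝ) →L[ℝ] ℝ}
    (hmax : IsMaxOn (fun w => ℓ0 w - breg f w c) S z) :
    ∀ u ∈ S, ℓ0 u - ℓ0 z ≤ breg f u c - breg f u z - breg f z c := by
  have hmin : IsMinOn (fun w => (-ℓ0) w + breg f w c) S z := by
    rw [isMinOn_iff]; intro w hw
    have := isMaxOn_iff.mp hmax w hw
    simp only [ContinuousLinearMap.neg_apply]
    linarith
  intro u hu
  have := prox_ineq hf hS hz hmin u hu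
  simp only [ContinuousLinearMap.neg_apply] at this
  linarith

lemma normZero {d : ℕ} (N : (Fin d → ℝ) → ℝ)
    (hdef : ∀ x : Fin d → ℝ, N x = 0 ↔ x = 0) : N 0 = 0 := (hdef 0).mpr rfl

lemma normNeg {d : ℕ} (N : (Fin d → ℝ) → ℝ)
    (hsmul : ∀ (c : ℝ) (x : Fin d → ℝ), N (c • x) = |c| * N x)
    (z : Fin d → ℝ) : N (-z) = N z := by
  have := hsmul (-1) z
  simpa using this

lemma normNonneg {d : ℕ} (N : (Fin d → ℝ) → ℝ)
    (hdef : ∀ x : Fin d → ℝ, N x = 0 ↔ x = 0)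
    (hsmul : ∀ (c : ℝ) (x : Fin d → ℝ), N (c • x) = |c| * N x)
    (hadd : ∀ x y : Fin d → ℝ, N (x + y) ≤ N x + N y) (z : Fin d → ℝ) : 0 ≤ N z := by
  have h := hadd z (-z)
  rw [add_neg_cancel, normZero N hdef, normNeg N hsmul] at h
  linarith

lemma absorb {μ cφ cψ ηj A B : ℝ} (hμ : 0 < μ) (hcφ : 0 < cφ) (hcψ : 0 < cψ)
    (hη2 : ηj ≤ Real.sqrt (cφ * cψ) / (2 * μ))
    (hA : 0 ≤ A) (hB : 0 ≤ B) :
    ηj * (μ * (A * B)) ≤ cφ / 4 * A ^ 2 + cψ / 4 * B ^ 2 := by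
  have h1 : ηj * (μ * (A * B)) ≤ (Real.sqrt (cφ * cψ) / (2 * μ)) * (μ * (A * B)) :=
    mul_le_mul_of_nonneg_right hη2 (by positivity)
  have h2 : (Real.sqrt (cφ * cψ) / (2 * μ)) * (μ * (A * B))
      = Real.sqrt cφ * Real.sqrt cψ * (A * B) / 2 := by
    rw [Real.sqrt_mul hcφ.le]; field_simp
  have h3 := Real.sq_sqrt hcφ.le
  have h4 := Real.sq_sqrt hcψ.le
  have h5 := Real.sqrt_nonneg cφ
  have h6 := Real.sqrt_nonneg cψ
  nlinarith [sq_nonneg (Real.sqrt cφ * A - Real.sqrt cψ * B)]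

lemma sum_Icc_shift (K : ℕ) (F : ℕ → ℝ) :
    ∑ k ∈ Finset.Icc 1 K, F k = ∑ i ∈ Finset.range K, F (i + 1) := by
  rw [← Finset.Ico_add_one_right_eq_Icc, Finset.sum_Ico_eq_sum_range]
  simp [Nat.add_comm, Nat.succ_sub_one]

end Aux
set_option maxHeartbeats 1000000 in
/-- Ergodic convergence of the extrapolated cyclic primal-dual method, abstract form.
Indices are natural numbers with truncated subtraction, so that `x (k - 2)` for `k = 1`
equals `x 0`, encoding the convention `x_{-1} = x_0` (similarly for `y` and `η 0 = 0`). -/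
theorem stmt_11 {m n : ℕ}
    (X : Set (Fin n → ℝ)) (hXne : X.Nonempty) (hXcpt : IsCompact X) (hXcvx : Convex ℝ X)
    (Y : Set (Fin m → ℝ)) (hYne : Y.Nonempty) (hYcpt : IsCompact Y) (hYcvx : Convex ℝ Y)
    (NX : (Fin n → ℝ) → ℝ) (NY : (Fin m → ℝ) → ℝ)
    (hNX_def : ∀ x, NX x = 0 ↔ x = 0)
    (hNX_smul : ∀ (c : ℝ) (x : Fin n → ℝ), NX (c • x) = |c| * NX x)
    (hNX_add : ∀ x y : Fin n → ℝ, NX (x + y) ≤ NX x + NX y)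
    (hNY_def : ∀ y, NY y = 0 ↔ y = 0)
    (hNY_smul : ∀ (c : ℝ) (y : Fin m → ℝ), NY (c • y) = |c| * NY y)
    (hNY_add : ∀ y z : Fin m → ℝ, NY (y + z) ≤ NY y + NY z)
    (cφ cψ : ℝ) (hcφ : 0 < cφ) (hcψ : 0 < cψ)
    (φ : (Fin n → ℝ) → ℝ) (hφ : Differentiable ℝ φ)
    (hφsc : ∀ a b : Fin n → ℝ,
      φ b ≥ φ a + fderiv ℝ φ a (b - a) + cφ / 2 * (NX (b - a)) ^ 2)
    (ψ : (Fin m → ℝ) → ℝ) (hψ : Differentiable ℝ ψ)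
    (hψsc : ∀ a b : Fin m → ℝ,
      ψ b ≥ ψ a + fderiv ℝ ψ a (b - a) + cψ / 2 * (NY (b - a)) ^ 2)
    (M Mx My : Matrix (Fin m) (Fin n) ℝ) (hM : M = Mx + My)
    (Lx Ly : ℝ) (hLx : 0 ≤ Lx) (hLy : 0 ≤ Ly) (hμ : 0 < Lx + Ly)
    (hbx : ∀ (a : Fin n → ℝ) (b : Fin m → ℝ), |dotp (Mx.mulVec a) b| ≤ Lx * NX a * NY b)
    (hby : ∀ (a : Fin n → ℝ) (b : Fin m → ℝ), |dotp (My.mulVec a) b| ≤ Ly * NX a * NY b)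
    (K : ℕ) (hK : 1 ≤ K)
    (η : ℕ → ℝ) (hη0 : η 0 = 0)
    (hη : ∀ k ∈ Finset.Icc 1 K,
      0 < η k ∧ η k ≤ Real.sqrt (cφ * cψ) / (2 * (Lx + Ly)))
    (x : ℕ → Fin n → ℝ) (y : ℕ → Fin m → ℝ)
    (hx0 : x 0 ∈ X) (hy0 : y 0 ∈ Y)
    (g : ℕ → Fin m → ℝ) (h : ℕ → Fin n → ℝ)
    (xhat : ℕ → Fin n → ℝ) (yhat : ℕ → Fin m → ℝ)
    (hxmin : ∀ k ∈ Finset.Icc 1 K, x k ∈ X ∧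
      IsMinOn (fun z => η k * dotp z (h k) + breg φ z (x (k - 1))) X (x k))
    (hymax : ∀ k ∈ Finset.Icc 1 K, y k ∈ Y ∧
      IsMaxOn (fun v => η k * dotp (g k) v - breg ψ v (y (k - 1))) Y (y k))
    (hidx : ∀ k ∈ Finset.Icc 1 K,
      M.mulVec (x k) - g k =
        My.mulVec ((x k - xhat k) - (η (k - 1) / η k) • (x (k - 1) - xhat (k - 1))) +
        Mx.mulVec ((x k - x (k - 1)) - (η (k - 1) / η k) • (x (k - 1) - x (k - 2))))
    (hidy : ∀ k ∈ Finset.Icc 1 K,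
      M.transpose.mulVec (y k) - h k =
        Mx.transpose.mulVec ((y k - yhat k) - (η (k - 1) / η k) • (y (k - 1) - yhat (k - 1))) +
        My.transpose.mulVec ((y k - y (k - 1)) - (η (k - 1) / η k) • (y (k - 1) - y (k - 2))))
    (hcx : ∀ k ∈ Finset.Icc 1 K, NX (x k - xhat k) ≤ NX (x k - x (k - 1)))
    (hcy : ∀ k ∈ Finset.Icc 1 K, NY (y k - yhat k) ≤ NY (y k - y (k - 1))) :
    (∀ u ∈ X, ∀ v ∈ Y,
      dotp (M.mulVec ((∑ k ∈ Finset.Icc 1 K, η k)⁻¹ • ∑ k ∈ Finset.Icc 1 K, η k • x k)) v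
        - dotp (M.mulVec u) ((∑ k ∈ Finset.Icc 1 K, η k)⁻¹ • ∑ k ∈ Finset.Icc 1 K, η k • y k)
      ≤ sSup {r : ℝ | ∃ u' ∈ X, ∃ v' ∈ Y, r = breg φ u' (x 0) + breg ψ v' (y 0)}
          / ∑ k ∈ Finset.Icc 1 K, η k) ∧
    ((∀ k ∈ Finset.Icc 1 K, η k = Real.sqrt (cφ * cψ) / (2 * (Lx + Ly))) →
      (∑ k ∈ Finset.Icc 1 K, η k) = K * Real.sqrt (cφ * cψ) / (2 * (Lx + Ly)) ∧
      ∀ ε : ℝ, 0 < ε →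
        ⌈2 * (Lx + Ly) *
            sSup {r : ℝ | ∃ u' ∈ X, ∃ v' ∈ Y, r = breg φ u' (x 0) + breg ψ v' (y 0)} /
            (Real.sqrt (cφ * cψ) * ε)⌉₊ ≤ K →
        ∀ u ∈ X, ∀ v ∈ Y,
          dotp (M.mulVec ((∑ k ∈ Finset.Icc 1 K, η k)⁻¹ • ∑ k ∈ Finset.Icc 1 K, η k • x k)) v
            - dotp (M.mulVec u)
                ((∑ k ∈ Finset.Icc 1 K, η k)⁻¹ • ∑ k ∈ Finset.Icc 1 K, η k • y k) ≤ ε) := by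
  -- basic facts
  have hs : 0 < Real.sqrt (cφ * cψ) := Real.sqrt_pos.mpr (by positivity)
  have NXnn := normNonneg NX hNX_def hNX_smul hNX_add
  have NYnn := normNonneg NY hNY_def hNY_smul hNY_add
  have sφ : ∀ a b : Fin n → ℝ, cφ / 2 * (NX (a - b)) ^ 2 ≤ breg φ a b := by
    intro a b; have := hφsc b a; simp only [breg]; linarith
  have sψ : ∀ a b : Fin m → ℝ, cψ / 2 * (NY (a - b)) ^ 2 ≤ breg ψ a b := by
    intro a b; have := hψsc b a; simp only [breg]; linarith
  have bφnn : ∀ a b : Fin n → ℝ, 0 ≤ breg φ a b := fun a b =>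
    le_trans (by positivity) (sφ a b)
  have bψnn : ∀ a b : Fin m → ℝ, 0 ≤ breg ψ a b := fun a b =>
    le_trans (by positivity) (sψ a b)
  set H := ∑ k ∈ Finset.Icc 1 K, η k with hHdef
  have hH : 0 < H := Finset.sum_pos (fun k hk => (hη k hk).1)
    ⟨1, Finset.mem_Icc.mpr ⟨le_refl 1, hK⟩⟩
  set SS := sSup {r : ℝ | ∃ u' ∈ X, ∃ v' ∈ Y, r = breg φ u' (x 0) + breg ψ v' (y 0)} with hSSdef
  clear_value H SS
  -- boundedness of the Bregman set
  have hbdd : BddAbove {r : ℝ | ∃ u' ∈ X, ∃ v' ∈ Y, r = breg φ u' (x 0) + breg ψ v' (y 0)} := by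
    set G : ((Fin n → ℝ) × (Fin m → ℝ)) → ℝ :=
      fun p => breg φ p.1 (x 0) + breg ψ p.2 (y 0) with hGdef
    have hGc : Continuous G := by
      rw [hGdef]
      simp only [breg]
      apply Continuous.add
      · exact ((hφ.continuous.comp continuous_fst).sub continuous_const).sub
          ((fderiv ℝ φ (x 0)).continuous.comp (continuous_fst.sub continuous_const))
      · exact ((hψ.continuous.comp continuous_snd).sub continuous_const).sub
          ((fderiv ℝ ψ (y 0)).continuous.comp (continuous_snd.sub continuous_const))
    have hset : {r : ℝ | ∃ u' ∈ X, ∃ v' ∈ Y, r = breg φ u' (x 0) + breg ψ v' (y 0)}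
        = G '' (X ×ˢ Y) := by
      ext r
      constructor
      · rintro ⟨u', hu', v', hv', rfl⟩
        exact ⟨(u', v'), ⟨hu', hv'⟩, rfl⟩
      · rintro ⟨⟨u', v'⟩, ⟨hu', hv'⟩, rfl⟩
        exact ⟨u', hu', v', hv', rfl⟩
    rw [hset]
    exact (hXcpt.prod hYcpt).bddAbove_image hGc.continuousOn
  -- the main per-run estimate
  have main : ∀ u ∈ X, ∀ v ∈ Y,
      (∑ k ∈ Finset.Icc 1 K, η k * (dotp (M.mulVec (x k)) v - dotp (M.mulVec u) (y k)))
        ≤ breg φ u (x 0) + breg ψ v (y 0) := by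
    intro u hu v hv
    set P : ℕ → (Fin m → ℝ) → ℝ := fun k w =>
      dotp (My.mulVec (x k - xhat k)) w + dotp (Mx.mulVec (x k - x (k-1))) w with hPdef
    set Q : ℕ → (Fin n → ℝ) → ℝ := fun k w =>
      dotp (Mx.mulVec w) (y k - yhat k) + dotp (My.mulVec w) (y k - y (k-1)) with hQdef
    set Φf : ℕ → ℝ := fun k => breg φ u (x k) + breg ψ v (y k) with hΦdef
    set τ : ℕ → ℝ := fun k => η k * (P k (v - y k) + Q k (x k - u)) with hτdef
    set Rf : ℕ → ℝ := fun k =>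
      cφ/4 * (NX (x k - x (k-1)))^2 + cψ/4 * (NY (y k - y (k-1)))^2 with hRdef
    set Df : ℕ → ℝ := fun k =>
      breg φ (x k) (x (k-1)) + breg ψ (y k) (y (k-1)) with hDdef
    clear_value P Q Φf τ Rf Df
    have hPabs : ∀ j ∈ Finset.Icc 1 K, ∀ w,
        |P j w| ≤ (Lx + Ly) * (NX (x j - x (j-1)) * NY w) := by
      intro j hj w
      rw [hPdef]
      refine le_trans (abs_add_le _ _) ?_
      have e1 := hby (x j - xhat j) w
      have e2 := hbx (x j - x (j-1)) w
      have e3 : Ly * NX (x j - xhat j) * NY w ≤ Ly * NX (x j - x (j-1)) * NY w := by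
        apply mul_le_mul_of_nonneg_right _ (NYnn w)
        exact mul_le_mul_of_nonneg_left (hcx j hj) hLy
      have := abs_le.mp e1
      have := abs_le.mp e2
      nlinarith [abs_nonneg (dotp (My.mulVec (x j - xhat j)) w)]
    have hQabs : ∀ j ∈ Finset.Icc 1 K, ∀ w,
        |Q j w| ≤ (Lx + Ly) * (NX w * NY (y j - y (j-1))) := by
      intro j hj w
      rw [hQdef]
      refine le_trans (abs_add_le _ _) ?_
      have e1 := hbx w (y j - yhat j)
      have e2 := hby w (y j - y (j-1))
      have e3 : Lx * NX w * NY (y j - yhat j) ≤ Lx * NX w * NY (y j - y (j-1)) := by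
        exact mul_le_mul_of_nonneg_left (hcy j hj) (mul_nonneg hLx (NXnn w))
      have := abs_le.mp e1
      have := abs_le.mp e2
      nlinarith [abs_nonneg (dotp (Mx.mulVec w) (y j - yhat j))]
    -- per-step key inequality
    have key : ∀ k ∈ Finset.Icc 1 K,
        η k * (dotp (M.mulVec (x k)) v - dotp (M.mulVec u) (y k))
          ≤ (Φf (k-1) - Φf k) - Df k + (τ k - τ (k-1)) + (Rf (k-1) + Rf k) := by
      intro k hk
      obtain ⟨hk1, hkK⟩ := Finset.mem_Icc.mp hk
      have hηk := (hη k hk).1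
      have hηkle := (hη k hk).2
      have hkm : k - 1 - 1 = k - 2 := by omega
      obtain ⟨hxkX, hxkmin⟩ := hxmin k hk
      obtain ⟨hykY, hykmax⟩ := hymax k hk
      -- primal prox inequality
      have primal : η k * dotp (x k - u) (h k)
          ≤ breg φ u (x (k-1)) - breg φ u (x k) - breg φ (x k) (x (k-1)) := by
        have hmin : IsMinOn (fun z => ((η k) • dotCLM (h k)) z + breg φ z (x (k-1))) X (x k) := by
          simp only [ContinuousLinearMap.smul_apply, dotCLM_apply, smul_eq_mul]
          exact hxkmin
        have := prox_ineq hφ hXcvx hxkX hmin u hu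
        simp only [ContinuousLinearMap.smul_apply, dotCLM_apply, smul_eq_mul] at this
        rw [dotp_sub_left, mul_sub]
        linarith
      -- dual prox inequality
      have dual : η k * dotp (g k) (v - y k)
          ≤ breg ψ v (y (k-1)) - breg ψ v (y k) - breg ψ (y k) (y (k-1)) := by
        have hmax : IsMaxOn (fun w => ((η k) • dotCLM (g k)) w - breg ψ w (y (k-1))) Y (y k) := by
          simp only [ContinuousLinearMap.smul_apply, dotCLM_apply, smul_eq_mul,
            dotp_comm _ (g k)]
          exact hykmax
        have := prox_ineq_max hψ hYcvx hykY hmax v hv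
        simp only [ContinuousLinearMap.smul_apply, dotCLM_apply, smul_eq_mul] at this
        rw [dotp_sub_right, mul_sub, dotp_comm (g k) v, dotp_comm (g k) (y k)]
        linarith
      -- gap decomposition
      have hdecomp : dotp (M.mulVec (x k)) v - dotp (M.mulVec u) (y k)
          = dotp (g k) (v - y k) + dotp (M.mulVec (x k) - g k) (v - y k)
            + dotp (x k - u) (h k) + dotp (x k - u) (M.transpose.mulVec (y k) - h k) := by
        simp only [dotp_sub_left, dotp_sub_right]
        rw [← dotp_transfer M (x k) (y k), ← dotp_transfer M u (y k)]
        ring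
      -- extrapolation error identities
      have hr : η k * (η (k-1) / η k) = η (k-1) := by
        field_simp
      have herr1 : η k * dotp (M.mulVec (x k) - g k) (v - y k)
          = η k * P k (v - y k) - η (k-1) * P (k-1) (v - y k) := by
        rw [hidx k hk, hPdef]
        simp only [Matrix.mulVec_sub, Matrix.mulVec_smul, dotp_add_left, dotp_sub_left,
          dotp_smul_left]
        rw [hkm]
        linear_combination (- dotp (My.mulVec (x (k-1))) (v - y k)
          + dotp (My.mulVec (xhat (k-1))) (v - y k)
          - dotp (Mx.mulVec (x (k-1))) (v - y k)
          + dotp (Mx.mulVec (x (k-2))) (v - y k)) * hr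
      have herr2 : η k * dotp (x k - u) (M.transpose.mulVec (y k) - h k)
          = η k * Q k (x k - u) - η (k-1) * Q (k-1) (x k - u) := by
        rw [hidy k hk, hQdef]
        simp only [dotp_add_right]
        rw [← dotp_transfer Mx (x k - u), ← dotp_transfer My (x k - u)]
        simp only [dotp_sub_right, dotp_smul_right]
        rw [hkm]
        linear_combination (- dotp (Mx.mulVec (x k - u)) (y (k-1))
          + dotp (Mx.mulVec (x k - u)) (yhat (k-1))
          - dotp (My.mulVec (x k - u)) (y (k-1))
          + dotp (My.mulVec (x k - u)) (y (k-2))) * hr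
      -- linearity of P and Q in the second argument
      have hPsub : ∀ j w1 w2, P j (w1 - w2) = P j w1 - P j w2 := by
        intro j w1 w2
        rw [hPdef]
        simp only [dotp_sub_right]
        ring
      have hQsub : ∀ j w1 w2, Q j (w1 - w2) = Q j w1 - Q j w2 := by
        intro j w1 w2
        rw [hQdef]
        simp only [Matrix.mulVec_sub, dotp_sub_left]
        ring
      have e1 : η (k-1) * P (k-1) (v - y k)
          = η (k-1) * P (k-1) (v - y (k-1)) - η (k-1) * P (k-1) (y k - y (k-1)) := by
        have h' : (v - y (k-1)) - (v - y k) = y k - y (k-1) := by abel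
        have h2 := hPsub (k-1) (v - y (k-1)) (v - y k)
        rw [h'] at h2
        rw [h2]; ring
      have e2 : η (k-1) * Q (k-1) (x k - u)
          = η (k-1) * Q (k-1) (x (k-1) - u) + η (k-1) * Q (k-1) (x k - x (k-1)) := by
        have h' : (x k - u) - (x (k-1) - u) = x k - x (k-1) := by abel
        have h2 := hQsub (k-1) (x k - u) (x (k-1) - u)
        rw [h'] at h2
        rw [h2]; ring
      -- cross term bound
      have hRnn : ∀ j, 0 ≤ Rf j := by
        intro j; rw [hRdef]
        have := NXnn (x j - x (j-1)); have := NYnn (y j - y (j-1))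
        positivity
      have hcross : η (k-1) * P (k-1) (y k - y (k-1)) - η (k-1) * Q (k-1) (x k - x (k-1))
          ≤ Rf (k-1) + Rf k := by
        rcases Nat.lt_or_ge (k-1) 1 with hc1 | hc1
        · have hk0 : k - 1 = 0 := by omega
          rw [hk0, hη0]
          simp only [zero_mul, sub_zero]
          linarith [hRnn 0, hRnn k]
        · have hkm1 : k - 1 ∈ Finset.Icc 1 K := Finset.mem_Icc.mpr ⟨hc1, by omega⟩
          have hη1 := (hη (k-1) hkm1).1
          have hη2 := (hη (k-1) hkm1).2
          have b1 : P (k-1) (y k - y (k-1))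
              ≤ (Lx+Ly) * (NX (x (k-1) - x (k-1-1)) * NY (y k - y (k-1))) :=
            le_of_abs_le (hPabs (k-1) hkm1 _)
          have b2 : -Q (k-1) (x k - x (k-1))
              ≤ (Lx+Ly) * (NX (x k - x (k-1)) * NY (y (k-1) - y (k-1-1))) :=
            neg_le.mpr ((abs_le.mp (hQabs (k-1) hkm1 _)).1)
          have c1 : η (k-1) * P (k-1) (y k - y (k-1))
              ≤ η (k-1) * ((Lx+Ly) * (NX (x (k-1) - x (k-1-1)) * NY (y k - y (k-1)))) :=
            mul_le_mul_of_nonneg_left b1 hη1.le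
          have d1 : η (k-1) * ((Lx+Ly) * (NX (x (k-1) - x (k-1-1)) * NY (y k - y (k-1))))
              ≤ cφ/4 * (NX (x (k-1) - x (k-1-1)))^2 + cψ/4 * (NY (y k - y (k-1)))^2 :=
            absorb hμ hcφ hcψ hη2 (NXnn _) (NYnn _)
          have c2 : η (k-1) * (-Q (k-1) (x k - x (k-1)))
              ≤ η (k-1) * ((Lx+Ly) * (NX (x k - x (k-1)) * NY (y (k-1) - y (k-1-1)))) :=
            mul_le_mul_of_nonneg_left b2 hη1.le
          have d2 : η (k-1) * ((Lx+Ly) * (NX (x k - x (k-1)) * NY (y (k-1) - y (k-1-1))))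
              ≤ cφ/4 * (NX (x k - x (k-1)))^2 + cψ/4 * (NY (y (k-1) - y (k-1-1)))^2 :=
            absorb hμ hcφ hcψ hη2 (NXnn _) (NYnn _)
          rw [mul_neg] at c2
          simp only [hRdef]
          linarith
      -- assemble the per-step inequality
      have split : η k * (dotp (M.mulVec (x k)) v - dotp (M.mulVec u) (y k))
          = η k * dotp (g k) (v - y k)
            + (η k * P k (v - y k) - η (k-1) * P (k-1) (v - y k))
            + η k * dotp (x k - u) (h k)
            + (η k * Q k (x k - u) - η (k-1) * Q (k-1) (x k - u)) := by
        rw [hdecomp, ← herr1, ← herr2]; ring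
      have eτk : τ k = η k * P k (v - y k) + η k * Q k (x k - u) := by
        rw [hτdef]; ring
      have eτk1 : τ (k-1) = η (k-1) * P (k-1) (v - y (k-1))
          + η (k-1) * Q (k-1) (x (k-1) - u) := by
        rw [hτdef]; ring
      rw [split]
      simp only [hΦdef, hDdef]
      linarith [primal, dual, hcross, e1, e2, eτk, eτk1]
    -- summation and telescoping
    have hτ0 : τ 0 = 0 := by rw [hτdef]; simp [hη0]
    have hR0 : Rf 0 = 0 := by
      rw [hRdef]
      simp only [Nat.zero_sub, sub_self, normZero NX hNX_def, normZero NY hNY_def]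
      norm_num
    have hRnn : ∀ j, 0 ≤ Rf j := by
      intro j; rw [hRdef]
      have := NXnn (x j - x (j-1)); have := NYnn (y j - y (j-1))
      positivity
    have hKmem : K ∈ Finset.Icc 1 K := Finset.mem_Icc.mpr ⟨hK, le_refl K⟩
    have hτK : τ K ≤ Rf K + Φf K := by
      have hPabsK := hPabs K hKmem (v - y K)
      have hQabsK := hQabs K hKmem (x K - u)
      have hη1 := (hη K hKmem).1
      have hη2 := (hη K hKmem).2
      have c1 : η K * P K (v - y K)
          ≤ η K * ((Lx+Ly) * (NX (x K - x (K-1)) * NY (v - y K))) :=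
        mul_le_mul_of_nonneg_left (le_of_abs_le hPabsK) hη1.le
      have d1 : η K * ((Lx+Ly) * (NX (x K - x (K-1)) * NY (v - y K)))
          ≤ cφ/4 * (NX (x K - x (K-1)))^2 + cψ/4 * (NY (v - y K))^2 :=
        absorb hμ hcφ hcψ hη2 (NXnn _) (NYnn _)
      have c2 : η K * Q K (x K - u)
          ≤ η K * ((Lx+Ly) * (NX (x K - u) * NY (y K - y (K-1)))) :=
        mul_le_mul_of_nonneg_left (le_of_abs_le hQabsK) hη1.le
      have d2 : η K * ((Lx+Ly) * (NX (x K - u) * NY (y K - y (K-1))))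
          ≤ cφ/4 * (NX (x K - u))^2 + cψ/4 * (NY (y K - y (K-1)))^2 :=
        absorb hμ hcφ hcψ hη2 (NXnn _) (NYnn _)
      have e1 : cψ/4 * (NY (v - y K))^2 ≤ breg ψ v (y K) := by
        refine le_trans ?_ (sψ v (y K))
        apply mul_le_mul_of_nonneg_right (by linarith) (sq_nonneg _)
      have e2 : cφ/4 * (NX (x K - u))^2 ≤ breg φ u (x K) := by
        have h' := sφ u (x K)
        have hn : NX (u - x K) = NX (x K - u) := by
          rw [show u - x K = -(x K - u) by abel, normNeg NX hNX_smul]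
        rw [hn] at h'
        refine le_trans ?_ h'
        apply mul_le_mul_of_nonneg_right (by linarith) (sq_nonneg _)
      have eτ : τ K = η K * P K (v - y K) + η K * Q K (x K - u) := by
        rw [hτdef]; ring
      rw [eτ]
      simp only [hRdef, hΦdef]
      linarith
    have hDR : ∀ i ∈ Finset.range K, 2 * Rf (i+1) ≤ Df (i+1) := by
      intro i _
      simp only [hRdef, hDdef]
      have h1 := sφ (x (i+1)) (x (i+1-1))
      have h2 := sψ (y (i+1)) (y (i+1-1))
      linarith
    have hsum1 : ∑ k ∈ Finset.Icc 1 K, η k * (dotp (M.mulVec (x k)) v - dotp (M.mulVec u) (y k))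
        ≤ ∑ k ∈ Finset.Icc 1 K,
            ((Φf (k-1) - Φf k) - Df k + (τ k - τ (k-1)) + (Rf (k-1) + Rf k)) :=
      Finset.sum_le_sum key
    have hsum2 : ∑ k ∈ Finset.Icc 1 K,
        ((Φf (k-1) - Φf k) - Df k + (τ k - τ (k-1)) + (Rf (k-1) + Rf k)) ≤ Φf 0 := by
      rw [sum_Icc_shift]
      have e : ∀ i ∈ Finset.range K,
          ((Φf (i+1-1) - Φf (i+1)) - Df (i+1) + (τ (i+1) - τ (i+1-1)) + (Rf (i+1-1) + Rf (i+1)))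
            = (Φf i - Φf (i+1)) + (- Df (i+1)) + (τ (i+1) - τ i) + (Rf i + Rf (i+1)) := by
        intro i _
        simp only [Nat.add_sub_cancel]
        ring
      rw [Finset.sum_congr rfl e]
      simp only [Finset.sum_add_distrib]
      have t1 : ∑ i ∈ Finset.range K, (Φf i - Φf (i+1)) = Φf 0 - Φf K :=
        Finset.sum_range_sub' Φf K
      have t2 : ∑ i ∈ Finset.range K, (τ (i+1) - τ i) = τ K - τ 0 :=
        Finset.sum_range_sub τ K
      have t3 : ∑ i ∈ Finset.range K, Rf i + Rf K
          = ∑ i ∈ Finset.range K, Rf (i+1) + Rf 0 := by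
        rw [← Finset.sum_range_succ, Finset.sum_range_succ' Rf K]
      have t4 : ∑ i ∈ Finset.range K, (- Df (i+1)) = - ∑ i ∈ Finset.range K, Df (i+1) := by
        rw [Finset.sum_neg_distrib]
      have t5 : ∑ i ∈ Finset.range K, (2 * Rf (i+1)) ≤ ∑ i ∈ Finset.range K, Df (i+1) :=
        Finset.sum_le_sum hDR
      have t6 : ∑ i ∈ Finset.range K, (2 * Rf (i+1))
          = 2 * ∑ i ∈ Finset.range K, Rf (i+1) := by
        rw [Finset.mul_sum]
      rw [t1, t2, t4, hτ0]
      have hΦKnn : 0 ≤ Φf K := by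
        rw [hΦdef]; exact add_nonneg (bφnn _ _) (bψnn _ _)
      linarith [hτK, hRnn K, t3, t5, t6, hR0]
    calc ∑ k ∈ Finset.Icc 1 K, η k * (dotp (M.mulVec (x k)) v - dotp (M.mulVec u) (y k))
        ≤ Φf 0 := le_trans hsum1 hsum2
      _ = breg φ u (x 0) + breg ψ v (y 0) := by rw [hΦdef]
    -- averaged gap identity
  have gapavg : ∀ u v,
      dotp (M.mulVec (H⁻¹ • ∑ k ∈ Finset.Icc 1 K, η k • x k)) v
        - dotp (M.mulVec u) (H⁻¹ • ∑ k ∈ Finset.Icc 1 K, η k • y k)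
      = H⁻¹ * ∑ k ∈ Finset.Icc 1 K,
          η k * (dotp (M.mulVec (x k)) v - dotp (M.mulVec u) (y k)) := by
    intro u v
    have h1 : dotp (M.mulVec (H⁻¹ • ∑ k ∈ Finset.Icc 1 K, η k • x k)) v
        = H⁻¹ * ∑ k ∈ Finset.Icc 1 K, η k * dotp (M.mulVec (x k)) v := by
      rw [dotp_transfer, dotp_smul_left, dotp_sum_left]
      congr 1
      refine Finset.sum_congr rfl fun k _ => ?_
      rw [dotp_smul_left, ← dotp_transfer]
    have h2 : dotp (M.mulVec u) (H⁻¹ • ∑ k ∈ Finset.Icc 1 K, η k • y k)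
        = H⁻¹ * ∑ k ∈ Finset.Icc 1 K, η k * dotp (M.mulVec u) (y k) := by
      rw [dotp_smul_right]
      congr 1
      rw [dotp_comm, dotp_sum_left]
      refine Finset.sum_congr rfl fun k _ => ?_
      rw [dotp_smul_left, dotp_comm]
    rw [h1, h2, ← mul_sub, ← Finset.sum_sub_distrib]
    congr 1
    exact Finset.sum_congr rfl fun k _ => by ring
  have part1 : ∀ u ∈ X, ∀ v ∈ Y,
      dotp (M.mulVec (H⁻¹ • ∑ k ∈ Finset.Icc 1 K, η k • x k)) v
        - dotp (M.mulVec u) (H⁻¹ • ∑ k ∈ Finset.Icc 1 K, η k • y k) ≤ SS / H := by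
    intro u hu v hv
    rw [gapavg u v]
    have hmain := main u hu v hv
    have hle : breg φ u (x 0) + breg ψ v (y 0) ≤ SS := by
      rw [hSSdef]
      exact le_csSup hbdd ⟨u, hu, v, hv, rfl⟩
    calc H⁻¹ * ∑ k ∈ Finset.Icc 1 K,
          η k * (dotp (M.mulVec (x k)) v - dotp (M.mulVec u) (y k))
        ≤ H⁻¹ * SS :=
          mul_le_mul_of_nonneg_left (le_trans hmain hle) (inv_nonneg.mpr hH.le)
      _ = SS / H := by rw [div_eq_mul_inv, mul_comm]
  refine ⟨part1, fun hconst => ?_⟩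
  have Hval : H = K * Real.sqrt (cφ * cψ) / (2 * (Lx + Ly)) := by
    rw [hHdef, Finset.sum_congr rfl hconst, Finset.sum_const, Nat.card_Icc]
    simp only [Nat.add_sub_cancel, nsmul_eq_mul]
    ring
  refine ⟨Hval, ?_⟩
  intro ε hε hKε u hu v hv
  have hp := part1 u hu v hv
  refine le_trans hp ?_
  have hceil : 2 * (Lx + Ly) * SS / (Real.sqrt (cφ * cψ) * ε) ≤ (K:ℝ) := Nat.ceil_le.mp hKε
  rw [div_le_iff₀ (by positivity)] at hceil
  have hH2 : 0 < (K:ℝ) * Real.sqrt (cφ * cψ) / (2 * (Lx + Ly)) := Hval ▸ hH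
  rw [Hval, div_le_iff₀ hH2]
  have hre : ε * ((K:ℝ) * Real.sqrt (cφ * cψ) / (2 * (Lx + Ly)))
      = ε * ((K:ℝ) * Real.sqrt (cφ * cψ)) / (2 * (Lx + Ly)) := by ring
  rw [hre, le_div_iff₀ (by positivity)]
  linarith [hceil]
end
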